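/- arXiv:2011.14274 — 2 statements merged into one kernel-verified Lean document; each statement's English description precedes it below -/
import Mathlib

section
/- Let (V, c) be a braided vector space over a field k with a fixed basis X, such that for all x, y ∈ X one has c(x ⊗ y) = λ_{x,y} · (x ▷ y) ⊗ x for some nonzero scalars λ_{x,y} and some function ▷ : X × X → X with each map y ↦ x ▷ y bijective. Then (X, ▷) is a rack; in particular the self-distributivity law x ▷ (y ▷ z) = (x ▷ y) ▷ (x ▷ z) holds for all x, y, z ∈ X. -/
open TensorProduct

/-! The braid equation evaluated on `x ⊗ y ⊗ z` gives two multiples of pure basis tensors,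
`((x ▷ y) ▷ (x ▷ z)) ⊗ (x ▷ y) ⊗ x` and `(x ▷ (y ▷ z)) ⊗ (x ▷ y) ⊗ x`, with nonzero
coefficients; linear independence of the basis of `V ⊗ V ⊗ V` forces their first
factors to agree, which is self-distributivity. -/

section Braid

variable {R V X : Type*} [CommSemiring R] [AddCommMonoid V] [Module R V]

def braidLeft (c : V ⊗[R] V →ₗ[R] V ⊗[R] V) : V ⊗[R] (V ⊗[R] V) →ₗ[R] V ⊗[R] (V ⊗[R] V) :=
  (TensorProduct.assoc R V V V).toLinearMap ∘ₗ TensorProduct.map c LinearMap.id ∘ₗ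
    (TensorProduct.assoc R V V V).symm.toLinearMap

def braidRight (c : V ⊗[R] V →ₗ[R] V ⊗[R] V) : V ⊗[R] (V ⊗[R] V) →ₗ[R] V ⊗[R] (V ⊗[R] V) :=
  TensorProduct.map LinearMap.id c

variable {c : V ⊗[R] V →ₗ[R] V ⊗[R] V}

theorem braidLeft_tmul_of_eq {u v u' v' : V} {r : R} (h : c (u ⊗ₜ v) = r • (u' ⊗ₜ v'))
    (w : V) : braidLeft c (u ⊗ₜ (v ⊗ₜ w)) = r • (u' ⊗ₜ (v' ⊗ₜ w)) := by
  simp [braidLeft, h, TensorProduct.smul_tmul']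

theorem braidRight_tmul_of_eq {v w v' w' : V} {r : R} (h : c (v ⊗ₜ w) = r • (v' ⊗ₜ w'))
    (u : V) : braidRight c (u ⊗ₜ (v ⊗ₜ w)) = r • (u ⊗ₜ (v' ⊗ₜ w')) := by
  simp [braidRight, h]

variable (b : X → V) {lam : X → X → R} {op : X → X → X}

theorem braidLeft_braidRight_braidLeft_tmul
    (hc : ∀ x y, c (b x ⊗ₜ[R] b y) = lam x y • (b (op x y) ⊗ₜ[R] b x)) (x y z : X) :
    (braidLeft c ∘ₗ braidRight c ∘ₗ braidLeft c) (b x ⊗ₜ (b y ⊗ₜ b z)) =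
      (lam x y * lam x z * lam (op x y) (op x z)) •
        (b (op (op x y) (op x z)) ⊗ₜ (b (op x y) ⊗ₜ b x)) := by
  simp only [LinearMap.comp_apply, braidLeft_tmul_of_eq (hc x y), map_smul,
    braidRight_tmul_of_eq (hc x z), braidLeft_tmul_of_eq (hc (op x y) (op x z)), smul_smul]

theorem braidRight_braidLeft_braidRight_tmul
    (hc : ∀ x y, c (b x ⊗ₜ[R] b y) = lam x y • (b (op x y) ⊗ₜ[R] b x)) (x y z : X) :
    (braidRight c ∘ₗ braidLeft c ∘ₗ braidRight c) (b x ⊗ₜ (b y ⊗ₜ b z)) =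
      (lam y z * lam x (op y z) * lam x y) •
        (b (op x (op y z)) ⊗ₜ (b (op x y) ⊗ₜ b x)) := by
  simp only [LinearMap.comp_apply, braidRight_tmul_of_eq (hc y z), map_smul,
    braidLeft_tmul_of_eq (hc x (op y z)), braidRight_tmul_of_eq (hc x y), smul_smul]

end Braid

theorem stmt_1_general {K : Type*} [Field K] {V : Type*} [AddCommGroup V] [Module K V]
    {X : Type*} (b : Module.Basis X K V)
    (c : V ⊗[K] V ≃ₗ[K] V ⊗[K] V)
    (hbraid :
      letI α := (TensorProduct.assoc K V V V).toLinearMap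
      letI α' := (TensorProduct.assoc K V V V).symm.toLinearMap
      letI c1 : V ⊗[K] (V ⊗[K] V) →ₗ[K] V ⊗[K] (V ⊗[K] V) :=
        α ∘ₗ (TensorProduct.map c.toLinearMap LinearMap.id) ∘ₗ α'
      letI c2 : V ⊗[K] (V ⊗[K] V) →ₗ[K] V ⊗[K] (V ⊗[K] V) :=
        TensorProduct.map LinearMap.id c.toLinearMap
      c1 ∘ₗ c2 ∘ₗ c1 = c2 ∘ₗ c1 ∘ₗ c2)
    (lam : X → X → K) (hlam : ∀ x y, lam x y ≠ 0)
    (op : X → X → X)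
    (hc : ∀ x y, c (b x ⊗ₜ[K] b y) = lam x y • (b (op x y) ⊗ₜ[K] b x)) :
    ∀ x y z, op x (op y z) = op (op x y) (op x z) := by
  intro x y z
  have hbraid_eq : braidLeft c.toLinearMap ∘ₗ braidRight c.toLinearMap ∘ₗ braidLeft c.toLinearMap =
      braidRight c.toLinearMap ∘ₗ braidLeft c.toLinearMap ∘ₗ braidRight c.toLinearMap := hbraid
  have h := LinearMap.congr_fun hbraid_eq (b x ⊗ₜ (b y ⊗ₜ b z))
  rw [braidLeft_braidRight_braidLeft_tmul (⇑b) hc,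
    braidRight_braidLeft_braidRight_tmul (⇑b) hc] at h
  simp only [← Module.Basis.tensorProduct_apply] at h
  have hcoeff : lam x y * lam x z * lam (op x y) (op x z) ≠ 0 := by simp [hlam]
  exact (congrArg Prod.fst
    ((b.tensorProduct (b.tensorProduct b)).linearIndependent.eq_of_smul_apply_eq_smul_apply
      _ _ _ _ hcoeff h)).symm

/-- If a braided vector space `(V, c)` has a basis `X` on which the braiding acts by
`c(x ⊗ y) = λ_{x,y} • (x ▷ y) ⊗ x` with nonzero scalars and bijective left
translations, then `(X, ▷)` satisfies the self-distributivity law, i.e. it is a rack. -/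
theorem stmt_1 {K : Type*} [Field K] {V : Type*} [AddCommGroup V] [Module K V]
    {X : Type*} (b : Module.Basis X K V)
    (c : V ⊗[K] V ≃ₗ[K] V ⊗[K] V)
    (hbraid :
      letI α := (TensorProduct.assoc K V V V).toLinearMap
      letI α' := (TensorProduct.assoc K V V V).symm.toLinearMap
      letI c1 : V ⊗[K] (V ⊗[K] V) →ₗ[K] V ⊗[K] (V ⊗[K] V) :=
        α ∘ₗ (TensorProduct.map c.toLinearMap LinearMap.id) ∘ₗ α'
      letI c2 : V ⊗[K] (V ⊗[K] V) →ₗ[K] V ⊗[K] (V ⊗[K] V) :=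
        TensorProduct.map LinearMap.id c.toLinearMap
      c1 ∘ₗ c2 ∘ₗ c1 = c2 ∘ₗ c1 ∘ₗ c2)
    (lam : X → X → K) (hlam : ∀ x y, lam x y ≠ 0)
    (op : X → X → X) (hbij : ∀ x, Function.Bijective (op x))
    (hc : ∀ x y, c (b x ⊗ₜ[K] b y) = lam x y • (b (op x y) ⊗ₜ[K] b x)) :
    ∀ x y z, op x (op y z) = op (op x y) (op x z) :=
  stmt_1_general b c hbraid lam hlam op hc
end

section
/- Let n, N be positive integers with 5 ∤ N and 17 ∤ n, and let k, s, t, j be integers. Suppose the congruences α − 4β ≡ 4nN (mod 8nN) and 12β ≡ 4nN (mod 8nN) hold, where α = 8nk(s+t+1) − 2jN(t+1) and β = 8nk(s+t+1) + 2jN(t+1). Then 8 divides N and 4 divides n. -/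
lemma aux_div4 (x y : ℤ) (h : 2 * x ∣ 5 * x + 4 * y) : (4 : ℤ) ∣ x := by
  obtain ⟨c, hc⟩ := h
  have hc1 : 5 * x + 4 * y = 2 * (x * c) := by linarith [hc]
  have h2 : (2 : ℤ) ∣ x := by
    obtain ⟨z, hz⟩ : ∃ z, x * c = z := ⟨_, rfl⟩
    rw [hz] at hc1; omega
  obtain ⟨m, hm⟩ := h2
  subst hm
  have hc2 : 5 * m + 2 * y = 2 * (m * c) := by linarith [hc1]
  have h2' : (2 : ℤ) ∣ m := by
    obtain ⟨z, hz⟩ : ∃ z, m * c = z := ⟨_, rfl⟩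
    rw [hz] at hc2; omega
  omega

lemma aux_div8 (x y : ℤ) (h : 2 * x ∣ 17 * x - 48 * y) : (8 : ℤ) ∣ x := by
  obtain ⟨c, hc⟩ := h
  have hc1 : 17 * x - 48 * y = 2 * (x * c) := by linarith [hc]
  have h2 : (2 : ℤ) ∣ x := by
    obtain ⟨z, hz⟩ : ∃ z, x * c = z := ⟨_, rfl⟩
    rw [hz] at hc1; omega
  obtain ⟨m, hm⟩ := h2
  subst hm
  have hc2 : 17 * m - 24 * y = 2 * (m * c) := by linarith [hc1]
  have h2' : (2 : ℤ) ∣ m := by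
    obtain ⟨z, hz⟩ : ∃ z, m * c = z := ⟨_, rfl⟩
    rw [hz] at hc2; omega
  obtain ⟨p, hp⟩ := h2'
  subst hp
  have hc3 : 17 * p - 12 * y = 2 * (p * c) := by linarith [hc2]
  have h2'' : (2 : ℤ) ∣ p := by
    obtain ⟨z, hz⟩ : ∃ z, p * c = z := ⟨_, rfl⟩
    rw [hz] at hc3; omega
  omega

/-- If `5 ∤ N`, `17 ∤ n`, `α = 8nk(s+t+1) − 2jN(t+1)`, `β = 8nk(s+t+1) + 2jN(t+1)`
and `α − 4β ≡ 4nN`, `12β ≡ 4nN (mod 8nN)`, then `8 ∣ N` and `4 ∣ n`. -/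
theorem stmt_5 (n N : ℕ) (hn : 1 ≤ n) (hN : 1 ≤ N)
    (h5 : ¬ (5 ∣ N)) (h17 : ¬ (17 ∣ n)) (k s t j : ℤ)
    (α β : ℤ)
    (hα : α = 8 * (n : ℤ) * k * (s + t + 1) - 2 * j * (N : ℤ) * (t + 1))
    (hβ : β = 8 * (n : ℤ) * k * (s + t + 1) + 2 * j * (N : ℤ) * (t + 1))
    (h1 : α - 4 * β ≡ 4 * (n : ℤ) * (N : ℤ) [ZMOD 8 * (n : ℤ) * (N : ℤ)])
    (h2 : 12 * β ≡ 4 * (n : ℤ) * (N : ℤ) [ZMOD 8 * (n : ℤ) * (N : ℤ)]) :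
    8 ∣ N ∧ 4 ∣ n := by
  obtain ⟨c1, e1⟩ := h1.dvd
  obtain ⟨c2, e2⟩ := h2.dvd
  subst hα hβ
  have d1 : (4 * (N : ℤ)) * (2 * (n : ℤ)) ∣
      (4 * (N : ℤ)) * (5 * (n : ℤ) + 4 * (j * (t + 1))) :=
    ⟨4 * c1 + c2, by linear_combination 4 * e1 + e2⟩
  have d2 : (4 * (n : ℤ)) * (2 * (N : ℤ)) ∣
      (4 * (n : ℤ)) * (17 * (N : ℤ) - 48 * (k * (s + t + 1))) :=
    ⟨12 * c1 + 5 * c2, by linear_combination 12 * e1 + 5 * e2⟩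
  have hNne : (4 * (N : ℤ)) ≠ 0 := by positivity
  have hnne : (4 * (n : ℤ)) ≠ 0 := by positivity
  have dn : 2 * (n : ℤ) ∣ 5 * (n : ℤ) + 4 * (j * (t + 1)) :=
    (mul_dvd_mul_iff_left hNne).mp d1
  have dN : 2 * (N : ℤ) ∣ 17 * (N : ℤ) - 48 * (k * (s + t + 1)) :=
    (mul_dvd_mul_iff_left hnne).mp d2
  have h4n : (4 : ℤ) ∣ (n : ℤ) := aux_div4 _ _ dn
  have h8N : (8 : ℤ) ∣ (N : ℤ) := aux_div8 _ _ dN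
  exact ⟨by exact_mod_cast h8N, by exact_mod_cast h4n⟩
end
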